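/- Let C be a compact convex subset of ℝ^d, h: ℝ^d → ℝ differentiable and μ-strongly convex (μ > 0), R ∈ ℝ^d, η > 0, and x ∈ C. Let x⁺ = argmax_{y ∈ C} {η⟨y, R⟩ - D_h(y, x)}. Then for every z ∈ C, η⟨R, z - x⟩ ≤ D_h(z, x) - D_h(z, x⁺) + (η²/(2μ))‖R‖². -/

import Mathlib

/-! The first-order optimality condition for `x⁺` over the convex set `C`, combined with the
three-point identity for Bregman divergences, gives
`η⟨R, z - x⁺⟩ ≤ D(z, x) - D(z, x⁺) - D(x⁺, x)`. Strong convexity bounds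
`D(x⁺, x) ≥ (μ/2)‖x⁺ - x‖²`, and Young's inequality absorbs the remaining term
`η⟨R, x⁺ - x⟩` into `(η²/(2μ))‖R‖² + (μ/2)‖x⁺ - x‖²`. -/

open Set
open scoped RealInnerProductSpace Gradient

theorem ConvexOn.hasFDerivAt_sub_le {E : Type*} [NormedAddCommGroup E] [NormedSpace ℝ E]
    {s : Set E} {g : E → ℝ} {g' : E →L[ℝ] ℝ} {p q : E} (hg : ConvexOn ℝ s g)
    (hp : p ∈ s) (hq : q ∈ s) (hg' : HasFDerivAt g g' q) :
    g' (p - q) ≤ g p - g q := by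
  let ℓ : ℝ →ᵃ[ℝ] E := AffineMap.lineMap q p
  have hline : ConvexOn ℝ (ℓ ⁻¹' s) (g ∘ ℓ) := hg.comp_affineMap ℓ
  have hderiv : HasDerivAt (g ∘ ℓ) (g' (p - q)) 0 :=
    (by simpa [ℓ] using hg' : HasFDerivAt g g' (ℓ 0)).comp_hasDerivAt 0
      AffineMap.hasDerivAt_lineMap
  simpa [ℓ, slope_def_field] using
    hline.le_slope_of_hasDerivAt (by simpa [ℓ] using hq) (by simpa [ℓ] using hp) one_pos hderiv

theorem IsMaxOn.hasFDerivAt_sub_nonpos {E : Type*} [NormedAddCommGroup E] [NormedSpace ℝ E]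
    {C : Set E} {f : E → ℝ} {f' : E →L[ℝ] ℝ} {a z : E} (hmax : IsMaxOn f C a)
    (hf : HasFDerivAt f f' a) (hC : Convex ℝ C) (ha : a ∈ C) (hz : z ∈ C) :
    f' (z - a) ≤ 0 :=
  hmax.localize.hasFDerivWithinAt_nonpos hf.hasFDerivWithinAt
    (sub_mem_posTangentConeAt_of_segment_subset (hC.segment_subset ha hz))

theorem mul_real_inner_le_young {E : Type*} [NormedAddCommGroup E] [InnerProductSpace ℝ E]
    {μ : ℝ} (hμ : 0 < μ) (η : ℝ) (a b : E) :
    η * ⟪a, b⟫ ≤ η ^ 2 / (2 * μ) * ‖a‖ ^ 2 + μ / 2 * ‖b‖ ^ 2 := by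
  have hsq : 0 ≤ ‖η • a - μ • b‖ ^ 2 := by positivity
  rw [norm_sub_sq_real, norm_smul, norm_smul, real_inner_smul_left, real_inner_smul_right,
    mul_pow, mul_pow, Real.norm_eq_abs, Real.norm_eq_abs, sq_abs, sq_abs] at hsq
  rw [div_mul_eq_mul_div, div_add' _ _ _ (by positivity), le_div_iff₀ (by positivity)]
  nlinarith

section Bregman

variable {E : Type*} [NormedAddCommGroup E] [InnerProductSpace ℝ E] [CompleteSpace E]

noncomputable def bregmanDiv (h : E → ℝ) (p q : E) : ℝ :=
  h p - h q - ⟪∇ h q, p - q⟫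

theorem bregmanDiv_sub_bregmanDiv (h : E → ℝ) (z x y : E) :
    bregmanDiv h z x - bregmanDiv h z y = ⟪∇ h y - ∇ h x, z - y⟫ + bregmanDiv h y x := by
  have hsplit : z - x = (z - y) + (y - x) := (sub_add_sub_cancel z y x).symm
  simp only [bregmanDiv, hsplit, inner_add_right, inner_sub_left]
  ring

theorem StrongConvexOn.mul_norm_sq_le_bregmanDiv {s : Set E} {h : E → ℝ} {μ : ℝ} {p q : E}
    (hh : StrongConvexOn s μ h) (hp : p ∈ s) (hq : q ∈ s) (hdiff : DifferentiableAt ℝ h q) :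
    μ / 2 * ‖p - q‖ ^ 2 ≤ bregmanDiv h p q := by
  have hderiv : HasFDerivAt (fun x => h x - μ / 2 * ‖x‖ ^ 2)
      (InnerProductSpace.toDual ℝ E (∇ h q) - (μ / 2) • 2 • innerSL ℝ q) q :=
    hdiff.hasGradientAt.hasFDerivAt.sub ((hasStrictFDerivAt_norm_sq q).hasFDerivAt.const_mul _)
  have key := (strongConvexOn_iff_convex.1 hh).hasFDerivAt_sub_le hp hq hderiv
  simp only [sub_apply, smul_apply, InnerProductSpace.toDual_apply_apply, innerSL_apply_apply,
    smul_eq_mul, nsmul_eq_mul, Nat.cast_ofNat] at key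
  have hinner : ⟪q, p - q⟫ = ⟪p, q⟫ - ‖q‖ ^ 2 := by
    rw [inner_sub_right, real_inner_self_eq_norm_sq, real_inner_comm]
  rw [hinner] at key
  rw [bregmanDiv, norm_sub_sq_real]
  linear_combination key

theorem IsMaxOn.mul_inner_le_inner_gradient_sub {C : Set E} {h : E → ℝ} {η : ℝ}
    {R x xplus z : E} (hmax : IsMaxOn (fun y => η * ⟪y, R⟫ - bregmanDiv h y x) C xplus)
    (hC : Convex ℝ C) (hxplus : xplus ∈ C) (hz : z ∈ C) (hdiff : DifferentiableAt ℝ h xplus) :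
    η * ⟪R, z - xplus⟫ ≤ ⟪∇ h xplus - ∇ h x, z - xplus⟫ := by
  let g : E → ℝ := fun y => ⟪η • R + ∇ h x, y⟫ - h y
  have hshift : ∀ y, η * ⟪y, R⟫ - bregmanDiv h y x = g y + (h x - ⟪∇ h x, x⟫) := by
    intro y
    simp only [g, bregmanDiv, inner_add_left, inner_sub_right, real_inner_smul_left,
      real_inner_comm R]
    ring
  have hgmax : IsMaxOn g C xplus := fun y hy => by
    simpa only [hshift, add_le_add_iff_right] using hmax hy
  have hgderiv : HasFDerivAt g
      (innerSL ℝ (η • R + ∇ h x) - InnerProductSpace.toDual ℝ E (∇ h xplus)) xplus :=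
    (innerSL ℝ (η • R + ∇ h x)).hasFDerivAt.sub hdiff.hasGradientAt.hasFDerivAt
  have key := hgmax.hasFDerivAt_sub_nonpos hgderiv hC hxplus hz
  simp only [sub_apply, innerSL_apply_apply, InnerProductSpace.toDual_apply_apply, inner_add_left,
    real_inner_smul_left] at key
  rw [inner_sub_left]
  linarith

end Bregman

theorem mirror_descent_step_general
    {d : ℕ}
    (C : Set (EuclideanSpace ℝ (Fin d))) (hCconvex : Convex ℝ C)
    (h : EuclideanSpace ℝ (Fin d) → ℝ) (hdiff : Differentiable ℝ h)
    (μ : ℝ) (hμ : 0 < μ)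
    (hstrong : ConvexOn ℝ Set.univ (fun x => h x - (μ / 2) * ‖x‖ ^ 2))
    (D : EuclideanSpace ℝ (Fin d) → EuclideanSpace ℝ (Fin d) → ℝ)
    (hD : ∀ p q, D p q = h p - h q - (inner ℝ (gradient h q) (p - q) : ℝ))
    (R : EuclideanSpace ℝ (Fin d)) (η : ℝ)
    (x : EuclideanSpace ℝ (Fin d))
    (xplus : EuclideanSpace ℝ (Fin d)) (hxplus : xplus ∈ C)
    (hargmax : ∀ y ∈ C,
      η * (inner ℝ y R : ℝ) - D y x ≤ η * (inner ℝ xplus R : ℝ) - D xplus x) :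
    ∀ z ∈ C,
      η * (inner ℝ R (z - x) : ℝ) ≤ D z x - D z xplus + (η ^ 2 / (2 * μ)) * ‖R‖ ^ 2 := by
  intro z hz
  obtain rfl : D = bregmanDiv h := funext₂ hD
  have hopt : η * ⟪R, z - xplus⟫ ≤ ⟪∇ h xplus - ∇ h x, z - xplus⟫ :=
    IsMaxOn.mul_inner_le_inner_gradient_sub hargmax hCconvex hxplus hz (hdiff xplus)
  have hthree := bregmanDiv_sub_bregmanDiv h z x xplus
  have hlower : μ / 2 * ‖xplus - x‖ ^ 2 ≤ bregmanDiv h xplus x :=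
    (strongConvexOn_iff_convex.2 hstrong).mul_norm_sq_le_bregmanDiv (mem_univ _) (mem_univ _)
      (hdiff x)
  have hyoung := mul_real_inner_le_young hμ η R (xplus - x)
  have hsplit : η * ⟪R, z - x⟫ = η * ⟪R, z - xplus⟫ + η * ⟪R, xplus - x⟫ := by
    rw [← mul_add, ← inner_add_right, sub_add_sub_cancel]
  linarith

/-- One-step mirror descent inequality: if `x⁺` maximizes
`η⟨y, R⟩ - D_h(y, x)` over a compact convex set `C` and `h` is `μ`-strongly
convex and differentiable, then for every `z ∈ C`,
`η⟨R, z - x⟩ ≤ D_h(z, x) - D_h(z, x⁺) + (η²/(2μ))‖R‖²`. -/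
theorem mirror_descent_step
    {d : ℕ}
    (C : Set (EuclideanSpace ℝ (Fin d))) (hCcompact : IsCompact C) (hCconvex : Convex ℝ C)
    (h : EuclideanSpace ℝ (Fin d) → ℝ) (hdiff : Differentiable ℝ h)
    (μ : ℝ) (hμ : 0 < μ)
    (hstrong : ConvexOn ℝ Set.univ (fun x => h x - (μ / 2) * ‖x‖ ^ 2))
    (D : EuclideanSpace ℝ (Fin d) → EuclideanSpace ℝ (Fin d) → ℝ)
    (hD : ∀ p q, D p q = h p - h q - (inner ℝ (gradient h q) (p - q) : ℝ))
    (R : EuclideanSpace ℝ (Fin d)) (η : ℝ) (hη : 0 < η)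
    (x : EuclideanSpace ℝ (Fin d)) (hx : x ∈ C)
    (xplus : EuclideanSpace ℝ (Fin d)) (hxplus : xplus ∈ C)
    (hargmax : ∀ y ∈ C,
      η * (inner ℝ y R : ℝ) - D y x ≤ η * (inner ℝ xplus R : ℝ) - D xplus x) :
    ∀ z ∈ C,
      η * (inner ℝ R (z - x) : ℝ) ≤ D z x - D z xplus + (η ^ 2 / (2 * μ)) * ‖R‖ ^ 2 :=
  mirror_descent_step_general C hCconvex h hdiff μ hμ hstrong D hD R η x xplus hxplus hargmax
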